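/- arXiv:2308.08535 — 4 statements merged into one kernel-verified Lean document; each statement's English description precedes it below -/
import Mathlib

section
/- Let k > ℓ ≥ 1 and let n be divisible by k−ℓ, with n sufficiently large. Then the maximum 1-density of the k-uniform ℓ-cycle, m₁(C_{n,k,ℓ}) = max over subhypergraphs F with at least 2 vertices of |E(F)|/(|V(F)|−1), equals (1/(k−ℓ))·(n/(n−1)). -/
/-!
Put `d = k - ℓ` and `n = d N`. Edge `i` of the cycle contains the block `{d i + s : s < d}`;
these `N` blocks are disjoint, each of size `d`, and cover all `n` vertices. If a subhypergraph
uses the edges indexed by a proper nonempty set `S`, some `i ∈ S` has its successor `i + 1` outside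
`S`, and since `ℓ ≥ 1` the edge `i` also contains the first vertex `d (i + 1)` of block `i + 1`.
Hence the subhypergraph has at least `d |S| + 1` vertices and density at most `1 / d ≤ N / (n - 1)`,
while the whole cycle has `N` edges on `n` vertices.
-/

open Finset

/-- The `k`-uniform `ℓ`-cycle on vertex set `ZMod n`. -/
def cycleHG (n k ℓ : ℕ) : Finset (Finset (ZMod n)) :=
  (Finset.range (n / (k - ℓ))).image
    (fun i => (Finset.range k).image (fun j => (((k - ℓ) * i + j : ℕ) : ZMod n)))

def cycleEdge (n k ℓ i : ℕ) : Finset (ZMod n) :=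
  (range k).image fun j => (((k - ℓ) * i + j : ℕ) : ZMod n)

lemma cycleHG_eq_image {n k ℓ N : ℕ} (hℓk : ℓ < k) (hN : n = (k - ℓ) * N) :
    cycleHG n k ℓ = (range N).image (cycleEdge n k ℓ) := by
  rw [cycleHG, hN, Nat.mul_div_cancel_left _ (by omega)]
  rfl

lemma natCast_mul_add_mem_cycleEdge {n k ℓ i j : ℕ} (hj : j < k) :
    (((k - ℓ) * i + j : ℕ) : ZMod n) ∈ cycleEdge n k ℓ i :=
  mem_image_of_mem _ (mem_range.mpr hj)

def cycleBlock (n d i : ℕ) : Finset (ZMod n) :=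
  (range d).image fun s => ((d * i + s : ℕ) : ZMod n)

lemma cycleBlock_subset_cycleEdge (n k ℓ i : ℕ) : cycleBlock n (k - ℓ) i ⊆ cycleEdge n k ℓ i :=
  image_subset_image (range_subset_range.mpr (Nat.sub_le k ℓ))

lemma eq_of_natCast_eq_of_lt {n a b : ℕ} (ha : a < n) (hb : b < n)
    (h : (a : ZMod n) = b) : a = b := by
  rw [← ZMod.val_cast_of_lt ha, ← ZMod.val_cast_of_lt hb, h]

section Blocks

variable {n d N : ℕ}

lemma val_div_of_mem_cycleBlock (hN : n = d * N) {i : ℕ} (hi : i < N) {x : ZMod n}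
    (hx : x ∈ cycleBlock n d i) : x.val / d = i := by
  obtain ⟨s, hs, rfl⟩ := mem_image.mp hx
  rw [mem_range] at hs
  rw [ZMod.val_cast_of_lt (by subst hN; nlinarith), Nat.mul_add_div (by omega),
    Nat.div_eq_of_lt hs, add_zero]

lemma card_cycleBlock (hN : n = d * N) {i : ℕ} (hi : i < N) : (cycleBlock n d i).card = d := by
  rw [cycleBlock, card_image_of_injOn, card_range]
  intro s hs t ht hst
  rw [coe_range, Set.mem_Iio] at hs ht
  have := eq_of_natCast_eq_of_lt (by subst hN; nlinarith) (by subst hN; nlinarith) hst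
  omega

lemma card_biUnion_cycleBlock (hN : n = d * N) {S : Finset ℕ} (hS : S ⊆ range N) :
    (S.biUnion (cycleBlock n d)).card = d * S.card := by
  have hlt : ∀ i ∈ S, i < N := fun i hi => mem_range.mp (hS hi)
  rw [card_biUnion, sum_congr rfl fun i hi => card_cycleBlock hN (hlt i hi), sum_const,
    smul_eq_mul, mul_comm]
  intro i hi j hj hij
  exact disjoint_left.mpr fun x hxi hxj =>
    hij ((val_div_of_mem_cycleBlock hN (hlt i hi) hxi).symm.trans
      (val_div_of_mem_cycleBlock hN (hlt j hj) hxj))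

lemma val_natCast_mul_succ_div (hd : 0 < d) (hN : n = d * N) (i : ℕ) :
    ((d * (i + 1) : ℕ) : ZMod n).val / d = (i + 1) % N := by
  rw [ZMod.val_natCast, hN, Nat.mul_mod_mul_left, Nat.mul_div_cancel_left _ hd]

end Blocks

lemma exists_mem_succ_mod_notMem {N : ℕ} {S : Finset ℕ} (hS : S ⊆ range N) (hne : S.Nonempty)
    (hS' : S ≠ range N) : ∃ i ∈ S, (i + 1) % N ∉ S := by
  by_contra! h
  obtain ⟨i, hi⟩ := hne
  have hiN := mem_range.mp (hS hi)
  have hshift : ∀ m, (i + m) % N ∈ S := by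
    intro m
    induction m with
    | zero => rwa [add_zero, Nat.mod_eq_of_lt hiN]
    | succ m ih => simpa only [Nat.mod_add_mod, add_assoc] using h _ ih
  refine hS' (Subset.antisymm hS fun j hj => ?_)
  have hjN := mem_range.mp hj
  have := hshift (N - i + j)
  rwa [show i + (N - i + j) = j + N by omega, Nat.add_mod_right, Nat.mod_eq_of_lt hjN] at this

section Edges

variable {n k ℓ N : ℕ}

lemma card_biUnion_cycleEdge_of_ne_range (hℓ : 0 < ℓ) (hℓk : ℓ < k) (hN : n = (k - ℓ) * N)
    {S : Finset ℕ} (hS : S ⊆ range N) (hne : S.Nonempty) (hS' : S ≠ range N) :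
    (k - ℓ) * S.card + 1 ≤ (S.biUnion (cycleEdge n k ℓ)).card := by
  obtain ⟨i, hi, hsucc⟩ := exists_mem_succ_mod_notMem hS hne hS'
  set v : ZMod n := (((k - ℓ) * (i + 1) : ℕ) : ZMod n)
  have hvi : v ∈ cycleEdge n k ℓ i := by
    simpa only [v, Nat.mul_succ] using natCast_mul_add_mem_cycleEdge (n := n) (i := i)
      (show k - ℓ < k by omega)
  have hv : v ∉ S.biUnion (cycleBlock n (k - ℓ)) := by
    intro hv
    obtain ⟨j, hj, hvj⟩ := mem_biUnion.mp hv
    rw [← val_div_of_mem_cycleBlock hN (mem_range.mp (hS hj)) hvj,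
      val_natCast_mul_succ_div (by omega) hN] at hj
    exact hsucc hj
  calc (k - ℓ) * S.card + 1 = (insert v (S.biUnion (cycleBlock n (k - ℓ)))).card := by
        rw [card_insert_of_notMem hv, card_biUnion_cycleBlock hN hS]
    _ ≤ (S.biUnion (cycleEdge n k ℓ)).card :=
        card_le_card (insert_subset (mem_biUnion.mpr ⟨i, hi, hvi⟩)
          (biUnion_mono fun j _ => cycleBlock_subset_cycleEdge n k ℓ j))

lemma card_le_card_biUnion_cycleEdge_range (hN : n = (k - ℓ) * N) :
    n ≤ ((range N).biUnion (cycleEdge n k ℓ)).card := by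
  calc n = ((range N).biUnion (cycleBlock n (k - ℓ))).card := by
        rw [card_biUnion_cycleBlock hN subset_rfl, card_range, hN]
    _ ≤ _ := card_le_card (biUnion_mono fun j _ => cycleBlock_subset_cycleEdge n k ℓ j)

/-- Two distinct edges `i`, `j` would each contain the other's first vertex, at forward offsets
`t, t' < k` with `n ∣ t + t'`; this is impossible once `n ≥ 2k`. -/
lemma cycleEdge_injOn (hℓk : ℓ < k) (hN : n = (k - ℓ) * N) (hn : 2 * k ≤ n) :
    Set.InjOn (cycleEdge n k ℓ) (range N) := by
  intro i hi j hj hij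
  rw [coe_range, Set.mem_Iio] at hi hj
  have hlt : ∀ m < N, (k - ℓ) * m < n := fun m hm => by subst hN; nlinarith
  have first_mem (m : ℕ) : (((k - ℓ) * m : ℕ) : ZMod n) ∈ cycleEdge n k ℓ m := by
    simpa only [add_zero] using natCast_mul_add_mem_cycleEdge (n := n) (ℓ := ℓ) (i := m)
      (show 0 < k by omega)
  obtain ⟨t, ht, hjt⟩ := mem_image.mp (hij ▸ first_mem j)
  obtain ⟨t', ht', hit'⟩ := mem_image.mp (hij ▸ first_mem i)
  rw [mem_range] at ht ht'
  have hsum : ((t + t' : ℕ) : ZMod n) = 0 := by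
    push_cast at hjt hit' ⊢
    linear_combination hjt + hit'
  have ht0 : t + t' = 0 :=
    Nat.eq_zero_of_dvd_of_lt ((ZMod.natCast_eq_zero_iff _ _).mp hsum) (by omega)
  rw [show t = 0 by omega, add_zero] at hjt
  exact Nat.eq_of_mul_eq_mul_left (by omega) (eq_of_natCast_eq_of_lt (hlt i hi) (hlt j hj) hjt)

lemma card_cycleHG (hℓk : ℓ < k) (hN : n = (k - ℓ) * N) (hn : 2 * k ≤ n) :
    (cycleHG n k ℓ).card = N := by
  rw [cycleHG_eq_image hℓk hN, card_image_of_injOn (cycleEdge_injOn hℓk hN hn), card_range]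

lemma div_sub_one_le_of_mul_add_one_le {d N n a u : ℕ} (hN : n = d * N) (hn : 2 ≤ n) (hu : d * a + 1 ≤ u)
    (hu₂ : 2 ≤ u) :
    (a : ℝ) / ((u : ℝ) - 1) ≤ N / ((n : ℝ) - 1) := by
  have hu' : (d : ℝ) * a + 1 ≤ u := by exact_mod_cast hu
  have hu₂' : (2 : ℝ) ≤ u := by exact_mod_cast hu₂
  have hn' : (2 : ℝ) ≤ n := by exact_mod_cast hn
  have hnR : (n : ℝ) = d * N := by exact_mod_cast hN
  rw [div_le_div_iff₀ (by linarith) (by linarith)]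
  nlinarith [a.cast_nonneg (α := ℝ), N.cast_nonneg (α := ℝ)]

lemma density_le_of_subset_cycleHG (hℓ : 0 < ℓ) (hℓk : ℓ < k) (hN : n = (k - ℓ) * N)
    (hn : 2 ≤ n) {U : Finset (ZMod n)} {F : Finset (Finset (ZMod n))} (hF : F ⊆ cycleHG n k ℓ)
    (hFU : ∀ e ∈ F, e ⊆ U) (hU : 2 ≤ U.card) :
    (F.card : ℝ) / ((U.card : ℝ) - 1) ≤ N / ((n : ℝ) - 1) := by
  set S := (range N).filter (cycleEdge n k ℓ · ∈ F)
  have hS : S ⊆ range N := filter_subset _ _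
  have hFS : F.card ≤ S.card := by
    refine (card_le_card (t := S.image (cycleEdge n k ℓ)) fun e he => ?_).trans card_image_le
    rw [cycleHG_eq_image hℓk hN] at hF
    obtain ⟨i, hi, rfl⟩ := mem_image.mp (hF he)
    exact mem_image_of_mem _ (mem_filter.mpr ⟨hi, he⟩)
  have hSU : (S.biUnion (cycleEdge n k ℓ)).card ≤ U.card :=
    card_le_card (biUnion_subset.mpr fun i hi => hFU _ (mem_filter.mp hi).2)
  rcases eq_or_ne S (range N) with hfull | hproper
  · have hnU : n ≤ U.card := (card_le_card_biUnion_cycleEdge_range hN).trans (hfull ▸ hSU)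
    have hFN : F.card ≤ N := by rwa [hfull, card_range] at hFS
    exact div_le_div₀ N.cast_nonneg (by exact_mod_cast hFN) (by norm_num; omega)
      (by norm_num; exact_mod_cast hnU)
  · refine div_sub_one_le_of_mul_add_one_le hN hn ?_ hU
    rcases S.eq_empty_or_nonempty with hempty | hne
    · rw [hempty, card_empty, Nat.le_zero] at hFS
      rw [hFS, mul_zero]
      omega
    · have := card_biUnion_cycleEdge_of_ne_range hℓ hℓk hN hS hne hproper
      nlinarith

end Edges

/-- for `k > ℓ ≥ 1` and all sufficiently large `n` divisible by `k - ℓ`,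
the maximum `1`-density `m₁(C_{n,k,ℓ})`, i.e. the maximum over subhypergraphs `(U, F)`
with at least two vertices of `|F| / (|U| - 1)`, equals `(1/(k-ℓ)) * (n/(n-1))`. -/
theorem stmt3 {k ℓ : ℕ} (hℓ1 : 1 ≤ ℓ) (hℓk : ℓ < k) :
    ∃ n₀ : ℕ, ∀ n : ℕ, n₀ ≤ n → (k - ℓ) ∣ n →
      IsGreatest {d : ℝ | ∃ (U : Finset (ZMod n)) (F : Finset (Finset (ZMod n))),
          F ⊆ cycleHG n k ℓ ∧ (∀ e ∈ F, e ⊆ U) ∧ 2 ≤ U.card ∧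
          d = (F.card : ℝ) / ((U.card : ℝ) - 1)}
        ((1 / ((k : ℝ) - (ℓ : ℝ))) * ((n : ℝ) / ((n : ℝ) - 1))) := by
  refine ⟨2 * k, fun n hn ⟨N, hN⟩ => ?_⟩
  have hd : (0 : ℝ) < k - ℓ := by rw [sub_pos]; exact_mod_cast hℓk
  have hN' : (n : ℝ) = (k - ℓ) * N := by rw [hN, Nat.cast_mul, Nat.cast_sub hℓk.le]
  rw [show 1 / ((k : ℝ) - ℓ) * (n / (n - 1)) = N / (n - 1) by rw [hN']; field_simp]
  have : NeZero n := ⟨by omega⟩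
  refine ⟨⟨univ, cycleHG n k ℓ, subset_rfl, fun e _ => subset_univ e, ?_, ?_⟩, ?_⟩
  · rw [card_univ, ZMod.card]
    omega
  · rw [card_univ, ZMod.card, card_cycleHG hℓk hN hn]
  · rintro x ⟨U, F, hF, hFU, hU, rfl⟩
    exact density_le_of_subset_cycleHG hℓ1 hℓk hN (by omega) hF hFU hU
end

section
/- Let k > ℓ ≥ 0 and let S be a subset of the edge set of the k-uniform ℓ-cycle C_{n,k,ℓ}. Then the number of subhypergraphs of C_{n,k,ℓ} with exactly t edges all belonging to S, no isolated vertices, and exactly c connected components is at most C(k|S|, c) · (2·16^k)^t, where C(·,·) denotes the binomial coefficient. -/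
open Finset

/-- Edge-connectivity of two vertices in the hypergraph with edge set `F`. -/
def EdgeConn {V : Type*} [DecidableEq V] (F : Finset (Finset V)) (u v : V) : Prop :=
  Relation.ReflTransGen (fun a b => ∃ e ∈ F, a ∈ e ∧ b ∈ e) u v

open Classical in
/-- The number of connected components of the hypergraph with edge set `F`. -/
noncomputable def compCount {V : Type*} [DecidableEq V] (F : Finset (Finset V)) : ℕ :=
  ((F.biUnion id).image (fun u => (F.biUnion id).filter (fun v => EdgeConn F u v))).card

/-!
Removing the component of a vertex `a` from an edge set with `c` components leaves `c - 1`
components avoiding `a`. Inducting on a finite vertex set `D` that contains all vertices therefore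
gives Pascal's recursion for `C(|D|, c)`, as soon as every vertex lies in at most `B ^ s` connected
edge sets of size `s`; the factor `2 ^ t` pays for the sizes, since
`∑_{1 ≤ s ≤ t} B ^ s (2B) ^ (t - s) ≤ (2B) ^ t`.
In the cycle every edge is an arc of `k` consecutive vertices, so a connected set of `s` arcs
through `a` lies within distance `ks` of `a`; it is then a set of arcs starting in a window of
fewer than `2ks` vertices, which gives `B = 4 ^ k`.
-/

namespace Hypergraph

section Components

variable {V : Type*} [DecidableEq V] {F G K : Finset (Finset V)} {e : Finset V} {u v w ρ : V}

def verts (F : Finset (Finset V)) : Finset V := F.biUnion id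

lemma mem_verts : v ∈ verts F ↔ ∃ e ∈ F, v ∈ e := by simp [verts]

lemma verts_mono (h : F ⊆ G) : verts F ⊆ verts G := biUnion_subset_biUnion_of_subset_left _ h

lemma verts_insert : verts (insert e F) = e ∪ verts F := biUnion_insert

lemma _root_.edgeConn_of_mem (he : e ∈ F) (hu : u ∈ e) (hv : v ∈ e) : EdgeConn F u v :=
  .single ⟨e, he, hu, hv⟩

lemma _root_.EdgeConn.trans (h₁ : EdgeConn F u v) (h₂ : EdgeConn F v w) : EdgeConn F u w :=
  Relation.ReflTransGen.trans h₁ h₂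

lemma _root_.EdgeConn.symm (h : EdgeConn F u v) : EdgeConn F v u := by
  induction h with
  | refl => exact .refl
  | tail _ hstep ih =>
    obtain ⟨e, he, ha, hb⟩ := hstep
    exact (edgeConn_of_mem he hb ha).trans ih

lemma _root_.EdgeConn.mono (hFG : F ⊆ G) (h : EdgeConn F u v) : EdgeConn G u v :=
  Relation.ReflTransGen.mono (fun _ _ ⟨e, he, ha, hb⟩ => ⟨e, hFG he, ha, hb⟩) _ _ h

lemma _root_.EdgeConn.mem_verts (h : EdgeConn F u v) (hu : u ∈ verts F) : v ∈ verts F := by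
  induction h with
  | refl => exact hu
  | tail _ hstep _ =>
    obtain ⟨e, he, -, hb⟩ := hstep
    exact Hypergraph.mem_verts.2 ⟨e, he, hb⟩

open Classical in
noncomputable def componentAt (F : Finset (Finset V)) (v : V) : Finset (Finset V) :=
  F.filter fun e => ∃ w ∈ e, EdgeConn F v w

lemma mem_componentAt : e ∈ componentAt F v ↔ e ∈ F ∧ ∃ w ∈ e, EdgeConn F v w := by
  classical
  simp [componentAt]

lemma componentAt_subset : componentAt F v ⊆ F := fun _ he => (mem_componentAt.1 he).1

lemma edgeConn_of_mem_componentAt (he : e ∈ componentAt F v) (hw : w ∈ e) : EdgeConn F v w := by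
  obtain ⟨heF, w', hw', hvw'⟩ := mem_componentAt.1 he
  exact hvw'.trans (edgeConn_of_mem heF hw' hw)

lemma edgeConn_componentAt (h : EdgeConn F v w) : EdgeConn (componentAt F v) v w := by
  induction h with
  | refl => exact .refl
  | tail hva hstep ih =>
    obtain ⟨e, he, ha, hb⟩ := hstep
    exact ih.trans (edgeConn_of_mem (mem_componentAt.2 ⟨he, _, ha, hva⟩) ha hb)

def IsConnectedAt (K : Finset (Finset V)) (ρ : V) : Prop :=
  ρ ∈ verts K ∧ ∀ e ∈ K, ∃ w ∈ e, EdgeConn K ρ w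

lemma IsConnectedAt.nonempty (hK : IsConnectedAt K ρ) : K.Nonempty :=
  let ⟨e, he, _⟩ := mem_verts.1 hK.1
  ⟨e, he⟩

lemma isConnectedAt_componentAt (hv : v ∈ verts F) : IsConnectedAt (componentAt F v) v := by
  obtain ⟨e, he, hve⟩ := mem_verts.1 hv
  refine ⟨mem_verts.2 ⟨e, mem_componentAt.2 ⟨he, v, hve, .refl⟩, hve⟩, fun e' he' => ?_⟩
  obtain ⟨-, w, hw, hvw⟩ := mem_componentAt.1 he'
  exact ⟨w, hw, edgeConn_componentAt hvw⟩

lemma IsConnectedAt.exists_mem_sdiff (hK : IsConnectedAt K ρ) (hGK : G ⊂ K)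
    (hρ : ρ ∈ verts G) : ∃ e ∈ K \ G, ∃ w ∈ e, w ∈ verts G := by
  by_contra! hsep
  -- otherwise nothing reachable from `ρ` in `K` could leave `verts G`
  have hclosed : ∀ w, EdgeConn K ρ w → w ∈ verts G := by
    intro w h
    induction h with
    | refl => exact hρ
    | tail _ hstep ih =>
      obtain ⟨e, he, ha, hb⟩ := hstep
      by_cases heG : e ∈ G
      · exact mem_verts.2 ⟨e, heG, hb⟩
      · exact absurd ih (hsep e (mem_sdiff.2 ⟨he, heG⟩) _ ha)
  obtain ⟨e, heK, heG⟩ := exists_of_ssubset hGK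
  obtain ⟨w, hw, hρw⟩ := hK.2 e heK
  exact hsep e (mem_sdiff.2 ⟨heK, heG⟩) w hw (hclosed w hρw)

lemma not_edgeConn_of_mem_verts_sdiff (hu : u ∈ verts (F \ componentAt F v)) :
    ¬ EdgeConn F v u := by
  obtain ⟨e, he, hue⟩ := mem_verts.1 hu
  rw [mem_sdiff] at he
  exact fun hvu => he.2 (mem_componentAt.2 ⟨he.1, u, hue, hvu⟩)

lemma edgeConn_sdiff_componentAt (hvu : ¬ EdgeConn F v u) (h : EdgeConn F u w) :
    EdgeConn (F \ componentAt F v) u w := by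
  induction h with
  | refl => exact .refl
  | tail hua hstep ih =>
    obtain ⟨e, he, ha, hb⟩ := hstep
    have heK : e ∉ componentAt F v := fun heK =>
      hvu ((edgeConn_of_mem_componentAt heK ha).trans (EdgeConn.symm hua))
    exact ih.trans (edgeConn_of_mem (mem_sdiff.2 ⟨he, heK⟩) ha hb)

open Classical in
noncomputable def vertexClass (F : Finset (Finset V)) (u : V) : Finset V :=
  (verts F).filter (EdgeConn F u)

lemma mem_vertexClass : w ∈ vertexClass F u ↔ w ∈ verts F ∧ EdgeConn F u w := by
  classical
  simp [vertexClass]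

lemma vertexClass_eq_of_edgeConn (h : EdgeConn F u v) : vertexClass F u = vertexClass F v := by
  ext w
  simp only [mem_vertexClass]
  exact and_congr_right fun _ => ⟨h.symm.trans, h.trans⟩

lemma compCount_eq_card_image : compCount F = #((verts F).image (vertexClass F)) := rfl

lemma compCount_eq_zero_iff : compCount F = 0 ↔ verts F = ∅ := by
  rw [compCount_eq_card_image, card_eq_zero, image_eq_empty]

lemma compCount_sdiff_componentAt_add_one (hv : v ∈ verts F) :
    compCount (F \ componentAt F v) + 1 = compCount F := by
  set K := componentAt F v
  have hverts : verts F = verts K ∪ verts (F \ K) := by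
    rw [verts, verts, verts, ← union_biUnion, union_sdiff_of_subset (componentAt_subset (v := v))]
  have hK : (verts K).image (vertexClass F) = {vertexClass F v} := by
    refine (image_congr fun u hu => ?_).trans
      (image_const ⟨v, (isConnectedAt_componentAt hv).1⟩ _)
    obtain ⟨e, he, hue⟩ := mem_verts.1 hu
    exact (vertexClass_eq_of_edgeConn (edgeConn_of_mem_componentAt he hue)).symm
  have hrest : (verts (F \ K)).image (vertexClass F) =
      (verts (F \ K)).image (vertexClass (F \ K)) := by
    refine image_congr fun u hu => ?_
    ext w
    simp only [mem_vertexClass]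
    constructor
    · rintro ⟨-, huw⟩
      have huw' := edgeConn_sdiff_componentAt (not_edgeConn_of_mem_verts_sdiff hu) huw
      exact ⟨huw'.mem_verts hu, huw'⟩
    · rintro ⟨hw, huw⟩
      exact ⟨verts_mono sdiff_subset hw, huw.mono sdiff_subset⟩
  have hnew : vertexClass F v ∉ (verts (F \ K)).image (vertexClass F) := by
    simp only [mem_image, not_exists, not_and]
    intro u hu huv
    have hvu : v ∈ vertexClass F u := huv ▸ mem_vertexClass.2 ⟨hv, .refl⟩
    exact not_edgeConn_of_mem_verts_sdiff hu (EdgeConn.symm (mem_vertexClass.1 hvu).2)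
  rw [compCount_eq_card_image, compCount_eq_card_image, hverts, image_union, hK, ← hrest,
    ← insert_eq, card_insert_of_notMem hnew]

end Components

section Counting

variable {V : Type*} [DecidableEq V] {S : Finset (Finset V)} {B : ℕ}

open Classical in
noncomputable def subfamilies (S : Finset (Finset V)) (D : Finset V) (t c : ℕ) :
    Finset (Finset (Finset V)) :=
  S.powerset.filter fun F => #F = t ∧ compCount F = c ∧ verts F ⊆ D

open Classical in
noncomputable def connectedSubfamilies (S : Finset (Finset V)) (ρ : V) (s : ℕ) :
    Finset (Finset (Finset V)) :=
  S.powerset.filter fun K => #K = s ∧ IsConnectedAt K ρ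

lemma mem_subfamilies {D : Finset V} {t c : ℕ} {F : Finset (Finset V)} :
    F ∈ subfamilies S D t c ↔ F ⊆ S ∧ #F = t ∧ compCount F = c ∧ verts F ⊆ D := by
  classical
  simp [subfamilies]

lemma mem_connectedSubfamilies {ρ : V} {s : ℕ} {K : Finset (Finset V)} :
    K ∈ connectedSubfamilies S ρ s ↔ K ⊆ S ∧ #K = s ∧ IsConnectedAt K ρ := by
  classical
  simp [connectedSubfamilies]

lemma card_subfamilies_empty_le_one (t c : ℕ) : #(subfamilies S ∅ t c) ≤ 1 := by
  have hsub : ∀ F ∈ subfamilies S ∅ t c, F ⊆ {∅} := by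
    intro F hF e he
    have hverts := subset_empty.1 (mem_subfamilies.1 hF).2.2.2
    exact mem_singleton.2 (eq_empty_of_forall_notMem fun x hx =>
      by simpa [hverts] using mem_verts.2 ⟨e, he, hx⟩)
  refine card_le_one.2 fun F hF G hG => ?_
  have hcard : #F = #G := (mem_subfamilies.1 hF).2.1.trans (mem_subfamilies.1 hG).2.1.symm
  rcases subset_singleton_iff.1 (hsub F hF) with rfl | rfl <;>
    rcases subset_singleton_iff.1 (hsub G hG) with rfl | rfl <;> simp_all

lemma card_filter_notMem_verts_subfamilies_le (a : V) (D : Finset V) (t c : ℕ) :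
    #((subfamilies S (insert a D) t c).filter (a ∉ verts ·)) ≤ #(subfamilies S D t c) := by
  refine card_le_card fun F hF => ?_
  rw [mem_filter, mem_subfamilies] at hF
  obtain ⟨⟨hFS, hFt, hFc, hFD⟩, ha⟩ := hF
  exact mem_subfamilies.2 ⟨hFS, hFt, hFc, (subset_insert_iff_of_notMem ha).1 hFD⟩

lemma componentAt_mem_connectedSubfamilies {F : Finset (Finset V)} {a : V} (hFS : F ⊆ S)
    (ha : a ∈ verts F) : componentAt F a ∈ connectedSubfamilies S a #(componentAt F a) :=
  mem_connectedSubfamilies.2 ⟨componentAt_subset.trans hFS, rfl, isConnectedAt_componentAt ha⟩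

lemma sdiff_componentAt_mem_subfamilies {F : Finset (Finset V)} {a : V} {D : Finset V}
    {t c : ℕ} (hF : F ∈ subfamilies S (insert a D) t (c + 1)) (ha : a ∈ verts F) :
    F \ componentAt F a ∈ subfamilies S D (t - #(componentAt F a)) c := by
  obtain ⟨hFS, hFt, hFc, hFD⟩ := mem_subfamilies.1 hF
  have hcomp := compCount_sdiff_componentAt_add_one ha
  refine mem_subfamilies.2 ⟨sdiff_subset.trans hFS,
    by rw [card_sdiff_of_subset componentAt_subset, hFt], by omega, fun x hx => ?_⟩
  have hxa : x ≠ a := by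
    rintro rfl
    exact not_edgeConn_of_mem_verts_sdiff hx .refl
  exact (mem_insert.1 (hFD (verts_mono sdiff_subset hx))).resolve_left hxa

lemma card_filter_mem_verts_subfamilies_le (a : V) (D : Finset V) (t c : ℕ) :
    #((subfamilies S (insert a D) t (c + 1)).filter (a ∈ verts ·)) ≤
      ∑ s ∈ Icc 1 t, #(connectedSubfamilies S a s) * #(subfamilies S D (t - s) c) := by
  classical
  calc _ ≤ #((Icc 1 t).biUnion fun s =>
          connectedSubfamilies S a s ×ˢ subfamilies S D (t - s) c) := by
        refine card_le_card_of_injOn (fun F => (componentAt F a, F \ componentAt F a)) ?_ ?_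
        · intro F hF
          rw [mem_coe, mem_filter] at hF
          obtain ⟨hF, ha⟩ := hF
          obtain ⟨hFS, hFt, -⟩ := mem_subfamilies.1 hF
          have hpos := card_pos.2 (isConnectedAt_componentAt ha).nonempty
          have hle : #(componentAt F a) ≤ t := hFt ▸ card_le_card componentAt_subset
          rw [coe_biUnion, Set.mem_iUnion₂]
          exact ⟨_, mem_Icc.2 ⟨hpos, hle⟩, mem_product.2
            ⟨componentAt_mem_connectedSubfamilies hFS ha,
              sdiff_componentAt_mem_subfamilies hF ha⟩⟩
        · intro F₁ _ F₂ _ h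
          have hunion := congrArg (fun p => p.1 ∪ p.2) h
          simpa only [union_sdiff_of_subset componentAt_subset] using hunion
    _ ≤ _ := card_biUnion_le.trans (sum_le_sum fun s _ => (card_product _ _).le)

lemma sum_Icc_pow_mul_two_mul_pow_le (B t : ℕ) :
    ∑ s ∈ Icc 1 t, B ^ s * (2 * B) ^ (t - s) ≤ (2 * B) ^ t := by
  have hterm : ∀ s ∈ Icc 1 t, B ^ s * (2 * B) ^ (t - s) = B ^ t * 2 ^ (t - s) := by
    intro s hs
    obtain ⟨u, rfl⟩ : ∃ u, t = s + u := ⟨t - s, by simp at hs; omega⟩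
    rw [Nat.add_sub_cancel_left]
    ring
  have hgeom : ∑ s ∈ Icc 1 t, 2 ^ (t - s) = ∑ j ∈ range t, 2 ^ j :=
    sum_nbij' (fun s => t - s) (fun j => t - j) (by intro s hs; simp at hs ⊢; omega)
      (by intro j hj; simp at hj ⊢; omega) (by intro s hs; simp at hs; omega)
      (by intro j hj; simp at hj; omega) (fun _ _ => rfl)
  rw [sum_congr rfl hterm, ← mul_sum, hgeom, mul_pow, mul_comm (2 ^ t)]
  exact Nat.mul_le_mul_left _ (Nat.geomSum_lt le_rfl fun j hj => mem_range.1 hj).le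

theorem card_subfamilies_le (hB : 1 ≤ B)
    (hloc : ∀ ρ s, #(connectedSubfamilies S ρ s) ≤ B ^ s) (D : Finset V) (t c : ℕ) :
    #(subfamilies S D t c) ≤ (#D).choose c * (2 * B) ^ t := by
  induction D using Finset.induction_on generalizing t c with
  | empty =>
    rcases c with _ | c
    · simpa using (card_subfamilies_empty_le_one t 0).trans (Nat.one_le_pow _ _ (by omega))
    · have hempty : subfamilies S ∅ t (c + 1) = ∅ := eq_empty_of_forall_notMem fun F hF => by
        obtain ⟨-, -, hc, hD⟩ := mem_subfamilies.1 hF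
        rw [compCount_eq_zero_iff.2 (subset_empty.1 hD)] at hc
        omega
      simp [hempty]
  | insert a D haD ih =>
    rw [card_insert_of_notMem haD,
      ← card_filter_add_card_filter_not (s := subfamilies S (insert a D) t c) (a ∈ verts ·)]
    have hout := card_filter_notMem_verts_subfamilies_le (S := S) a D t c
    rcases c with _ | c
    · have hin : (subfamilies S (insert a D) t 0).filter (a ∈ verts ·) = ∅ :=
        filter_eq_empty_iff.2 fun F hF ha => by
          rw [compCount_eq_zero_iff.1 (mem_subfamilies.1 hF).2.2.1] at ha
          exact notMem_empty a ha
      simpa [hin] using hout.trans (ih t 0)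
    · calc _ ≤ ∑ s ∈ Icc 1 t, B ^ s * ((#D).choose c * (2 * B) ^ (t - s)) +
            (#D).choose (c + 1) * (2 * B) ^ t :=
          add_le_add ((card_filter_mem_verts_subfamilies_le a D t c).trans
            (sum_le_sum fun s _ => Nat.mul_le_mul (hloc a s) (ih (t - s) c)))
            (hout.trans (ih t (c + 1)))
        _ ≤ (#D).choose c * (2 * B) ^ t + (#D).choose (c + 1) * (2 * B) ^ t := by
          gcongr
          simp_rw [mul_left_comm _ ((#D).choose c), ← mul_sum]
          exact Nat.mul_le_mul_left _ (sum_Icc_pow_mul_two_mul_pow_le B t)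
        _ = _ := by rw [Nat.choose_succ_succ', add_mul]

open Classical in
theorem card_filter_compCount_le (hB : 1 ≤ B)
    (hloc : ∀ ρ s, #(connectedSubfamilies S ρ s) ≤ B ^ s) (t c : ℕ) :
    #(S.powerset.filter fun F => #F = t ∧ compCount F = c) ≤
      (#(verts S)).choose c * (2 * B) ^ t := by
  refine (card_le_card fun F hF => ?_).trans (card_subfamilies_le hB hloc (verts S) t c)
  rw [mem_filter, mem_powerset] at hF
  exact mem_subfamilies.2 ⟨hF.1, hF.2.1, hF.2.2, verts_mono hF.1⟩

end Counting

section Arcs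

variable {R : Type*} [AddCommGroupWithOne R] [DecidableEq R]

noncomputable def window (a : R) (r : ℕ) : Finset R :=
  (Ioo (-(r : ℤ)) r).image fun z : ℤ => a + (z : R)

lemma mem_window {a b : R} {r : ℕ} :
    b ∈ window a r ↔ ∃ z : ℤ, -(r : ℤ) < z ∧ z < r ∧ a + z = b := by
  simp [window, and_assoc]

lemma card_window_le (a : R) (r : ℕ) : #(window a r) ≤ 2 * r := by
  refine card_image_le.trans ?_
  rw [Int.card_Ioo]
  omega

lemma window_mono {a : R} {r r' : ℕ} (h : r ≤ r') : window a r ⊆ window a r' :=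
  image_subset_image (Ioo_subset_Ioo (by omega) (by omega))

lemma mem_window_add {a b c : R} {r r' : ℕ} (hb : b ∈ window a r) (hc : c ∈ window b r') :
    c ∈ window a (r + r') := by
  obtain ⟨z, hz₁, hz₂, rfl⟩ := mem_window.1 hb
  obtain ⟨z', hz₁', hz₂', rfl⟩ := mem_window.1 hc
  exact mem_window.2 ⟨z + z', by push_cast; omega, by push_cast; omega, by push_cast; abel⟩

theorem IsConnectedAt.verts_subset_window {K : Finset (Finset R)} {ρ : R} {k : ℕ}
    (hdiam : ∀ e ∈ K, ∀ a ∈ e, ∀ b ∈ e, b ∈ window a k) (hK : IsConnectedAt K ρ) :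
    verts K ⊆ window ρ (k * #K) := by
  suffices grow : ∀ m, ∀ G ⊆ K, #K = #G + m → ρ ∈ verts G →
      verts G ⊆ window ρ (k * #G) → verts K ⊆ window ρ (k * #K) by
    obtain ⟨e₀, he₀, hρe₀⟩ := mem_verts.1 hK.1
    refine grow (#K - 1) {e₀} (singleton_subset_iff.2 he₀) ?_
      (mem_verts.2 ⟨e₀, mem_singleton_self _, hρe₀⟩) ?_
    · have := card_pos.2 hK.nonempty
      rw [card_singleton]
      omega
    · rw [card_singleton, mul_one]
      intro b hb
      obtain ⟨e, he, hbe⟩ := mem_verts.1 hb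
      rw [mem_singleton] at he
      subst he
      exact hdiam e he₀ ρ hρe₀ b hbe
  intro m
  induction m with
  | zero =>
    intro G hGK hcard _ hG
    rwa [eq_of_subset_of_card_le hGK hcard.le] at hG
  | succ m ih =>
    intro G hGK hcard hρ hG
    -- add an edge of `K` meeting `verts G`: its vertices are within `k` of the meeting point
    obtain ⟨e, he, w, hwe, hwG⟩ :=
      hK.exists_mem_sdiff (Finset.ssubset_iff_subset_ne.2 ⟨hGK, by rintro rfl; omega⟩) hρ
    rw [mem_sdiff] at he
    refine ih (insert e G) (insert_subset he.1 hGK) (by rw [card_insert_of_notMem he.2]; omega)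
      (verts_mono (subset_insert _ _) hρ) ?_
    rw [verts_insert, card_insert_of_notMem he.2, mul_add_one]
    exact union_subset (fun b hb => mem_window_add (hG hwG) (hdiam e he.1 w hwe b hb))
      (hG.trans (window_mono (by omega)))

def arc (k : ℕ) (x : R) : Finset R := (range k).image fun j : ℕ => x + (j : R)

lemma mem_window_of_mem_arc {k : ℕ} {x a b : R} (ha : a ∈ arc k x) (hb : b ∈ arc k x) :
    b ∈ window a k := by
  simp only [arc, mem_image, mem_range] at ha hb
  obtain ⟨i, hi, rfl⟩ := ha
  obtain ⟨j, hj, rfl⟩ := hb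
  exact mem_window.2 ⟨j - i, by omega, by omega, by push_cast; abel⟩

lemma mem_arc_self {k : ℕ} {x : R} (hk : (arc k x).Nonempty) : x ∈ arc k x := by
  obtain ⟨y, hy⟩ := hk
  simp only [arc, mem_image, mem_range] at hy ⊢
  obtain ⟨j, hj, -⟩ := hy
  exact ⟨0, by omega, by simp⟩

lemma card_verts_le_of_forall_eq_arc {S : Finset (Finset R)} {k : ℕ}
    (hS : ∀ e ∈ S, ∃ x, e = arc k x) : #(verts S) ≤ k * #S := by
  calc #(verts S) ≤ ∑ e ∈ S, #e := card_biUnion_le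
    _ ≤ ∑ _e ∈ S, k := sum_le_sum fun e he => by
        obtain ⟨x, rfl⟩ := hS e he
        exact card_image_le.trans (card_range k).le
    _ = k * #S := by rw [sum_const, smul_eq_mul, mul_comm]

theorem card_connectedSubfamilies_le_of_forall_eq_arc {S : Finset (Finset R)} {k : ℕ}
    (hS : ∀ e ∈ S, ∃ x, e = arc k x) (ρ : R) (s : ℕ) :
    #(connectedSubfamilies S ρ s) ≤ (4 ^ k) ^ s := by
  calc #(connectedSubfamilies S ρ s) ≤ #((window ρ (k * s)).image (arc k)).powerset := by
        refine card_le_card fun K hKmem => ?_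
        obtain ⟨hKS, hKs, hK⟩ := mem_connectedSubfamilies.1 hKmem
        have hdiam : ∀ e ∈ K, ∀ a ∈ e, ∀ b ∈ e, b ∈ window a k := by
          intro e he a ha b hb
          obtain ⟨x, rfl⟩ := hS e (hKS he)
          exact mem_window_of_mem_arc ha hb
        refine mem_powerset.2 fun e he => ?_
        obtain ⟨w, hw, -⟩ := hK.2 e he
        obtain ⟨x, rfl⟩ := hS e (hKS he)
        refine mem_image.2 ⟨x, ?_, rfl⟩
        rw [← hKs]
        exact hK.verts_subset_window hdiam (mem_verts.2 ⟨_, he, mem_arc_self ⟨w, hw⟩⟩)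
    _ = 2 ^ #((window ρ (k * s)).image (arc k)) := card_powerset _
    _ ≤ 2 ^ (2 * (k * s)) :=
        Nat.pow_le_pow_right two_pos (card_image_le.trans (card_window_le _ _))
    _ = (4 ^ k) ^ s := by rw [← pow_mul, pow_mul]; norm_num

end Arcs

end Hypergraph

open Hypergraph

lemma exists_eq_arc_of_mem_cycleHG {n k ℓ : ℕ} {e : Finset (ZMod n)}
    (he : e ∈ cycleHG n k ℓ) : ∃ x, e = arc k x := by
  obtain ⟨i, -, rfl⟩ := mem_image.1 he
  exact ⟨((k - ℓ) * i : ℕ), by simp only [arc, Nat.cast_add]⟩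

open Classical in
theorem stmt4_general {n k ℓ : ℕ} (S : Finset (Finset (ZMod n)))
    (hS : S ⊆ cycleHG n k ℓ) (t c : ℕ) :
    (S.powerset.filter (fun F => F.card = t ∧ compCount F = c)).card
      ≤ Nat.choose (k * S.card) c * (2 * 16 ^ k) ^ t := by
  have harc : ∀ e ∈ S, ∃ x, e = arc k x := fun e he => exists_eq_arc_of_mem_cycleHG (hS he)
  calc _ ≤ (#(verts S)).choose c * (2 * 4 ^ k) ^ t :=
        card_filter_compCount_le (Nat.one_le_pow _ _ (by norm_num))
          (card_connectedSubfamilies_le_of_forall_eq_arc harc) t c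
    _ ≤ _ := Nat.mul_le_mul (Nat.choose_le_choose c (card_verts_le_of_forall_eq_arc harc))
        (Nat.pow_le_pow_left (by gcongr; norm_num) t)

open Classical in
/-- the number of subhypergraphs of `C_{n,k,ℓ}` (with no isolated
vertices, i.e. given by their edge sets) having exactly `t` edges, all belonging to
`S`, and exactly `c` connected components, is at most `C(k|S|, c) * (2 * 16^k)^t`. -/
theorem stmt4 {n k ℓ : ℕ} (hℓk : ℓ < k) (S : Finset (Finset (ZMod n)))
    (hS : S ⊆ cycleHG n k ℓ) (t c : ℕ) :
    (S.powerset.filter (fun F => F.card = t ∧ compCount F = c)).card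
      ≤ Nat.choose (k * S.card) c * (2 * 16 ^ k) ^ t :=
  stmt4_general S hS t c
end

section
/- Let G be a balanced bipartite graph on 2n vertices (n vertices on each side) with minimum degree at least 3n/4. Then there exists an absolute constant C and a probability distribution μ on perfect matchings of G that is (C/n)-spread: for every matching M' of G with s edges, the probability that a μ-random perfect matching contains all edges of M' is at most (C/n)^s. -/
/-!
Take `μ` uniform on the perfect matchings of `E`; they exist by Hall's theorem. Everything rests
on a switching argument: if a perfect matching `f` sends `a` to `b`, then for every `a'` with
`(a, f a')` and `(a', b)` edges, `f ∘ swap a a'` is again a perfect matching, it keeps every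
prescribed pair avoiding `a'`, and it remembers `a'` as the preimage of `b`. With minimum degree
`d ≥ 3n/4` there are at least `2d - n - s` such `a'`, so each further prescribed pair divides the
count by `m ≈ n/7` while `s ≤ n/3`. For `s > n/3`, the trivial bound `n ^ (n - s)` is compared with
the lower bound `n ^ n e ^ (-4n)` on the number of perfect matchings, obtained from the same
switching inequality by deleting the missing edges of the complete bipartite graph one at a time;
then `e ^ (4n) ≤ e ^ (12 s) ≤ (3 ^ 12) ^ s`.
-/

open Finset Function
open scoped Nat

namespace SpreadMatching

variable {n : ℕ}

def perfectMatchings (E : Finset (Fin n × Fin n)) : Finset (Fin n → Fin n) :=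
  {f | Bijective f ∧ ∀ i, (i, f i) ∈ E}

def extending (E : Finset (Fin n × Fin n)) {s : ℕ} (x y : Fin s → Fin n) :
    Finset (Fin n → Fin n) :=
  {f ∈ perfectMatchings E | ∀ i, f (x i) = y i}

def HasMinDegree (E : Finset (Fin n × Fin n)) (d : ℕ) : Prop :=
  (∀ a, d ≤ #{e ∈ E | e.1 = a}) ∧ ∀ b, d ≤ #{e ∈ E | e.2 = b}

variable {E E' : Finset (Fin n × Fin n)} {d : ℕ}

lemma mem_perfectMatchings {f : Fin n → Fin n} :
    f ∈ perfectMatchings E ↔ Bijective f ∧ ∀ i, (i, f i) ∈ E := by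
  simp [perfectMatchings]

lemma card_filter_fst_eq (E : Finset (Fin n × Fin n)) (a : Fin n) :
    #{e ∈ E | e.1 = a} = #{b | (a, b) ∈ E} := by
  refine card_nbij' Prod.snd (Prod.mk a) ?_ ?_ ?_ ?_ <;> intro e <;> grind

lemma card_filter_snd_eq (E : Finset (Fin n × Fin n)) (b : Fin n) :
    #{e ∈ E | e.2 = b} = #{a | (a, b) ∈ E} := by
  refine card_nbij' Prod.fst (Prod.mk · b) ?_ ?_ ?_ ?_ <;> intro e <;> grind

lemma HasMinDegree.mono (hE : HasMinDegree E d) (h : E ⊆ E') : HasMinDegree E' d :=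
  ⟨fun a => (hE.1 a).trans (card_le_card (filter_subset_filter _ h)),
    fun b => (hE.2 b).trans (card_le_card (filter_subset_filter _ h))⟩

lemma HasMinDegree.le_card_row (hE : HasMinDegree E d) (a : Fin n) :
    d ≤ #{b | (a, b) ∈ E} :=
  card_filter_fst_eq E a ▸ hE.1 a

lemma HasMinDegree.le_card_col (hE : HasMinDegree E d) (b : Fin n) :
    d ≤ #{a | (a, b) ∈ E} :=
  card_filter_snd_eq E b ▸ hE.2 b

lemma card_perfectMatchings_univ :
    #(perfectMatchings (univ : Finset (Fin n × Fin n))) = n ! := by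
  have : perfectMatchings univ = (univ : Finset (Equiv.Perm (Fin n))).map
      ⟨(⇑), DFunLike.coe_injective⟩ := by
    ext f
    simp only [mem_perfectMatchings, mem_univ, implies_true, and_true, mem_map, true_and,
      Embedding.coeFn_mk]
    exact ⟨fun hf => ⟨.ofBijective f hf, rfl⟩, by rintro ⟨σ, rfl⟩; exact σ.bijective⟩
  rw [this, card_map, card_univ, Fintype.card_perm, Fintype.card_fin]

lemma perfectMatchings_nonempty (hE : HasMinDegree E d) (hd : n ≤ 2 * d) :
    (perfectMatchings E).Nonempty := by
  set t : Fin n → Finset (Fin n) := fun a => {b | (a, b) ∈ E}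
  have hall : ∀ A : Finset (Fin n), #A ≤ #(A.biUnion t) := by
    intro A
    obtain rfl | ⟨a, ha⟩ := A.eq_empty_or_nonempty
    · simp
    by_cases hcover : A.biUnion t = univ
    · rw [hcover]
      exact card_le_card (subset_univ A)
    obtain ⟨b, hb⟩ : ∃ b, b ∉ A.biUnion t := by simpa [eq_univ_iff_forall] using hcover
    have hA : A ⊆ ({a | (a, b) ∈ E} : Finset (Fin n))ᶜ := fun a' ha' =>
      mem_compl.2 fun h => hb (mem_biUnion.2 ⟨a', ha', by simpa [t] using h⟩)
    -- hence `#A ≤ n - d ≤ d ≤ #(t a)`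
    have hAcard := card_le_card hA
    rw [card_compl, Fintype.card_fin] at hAcard
    have := hE.le_card_col b
    have := card_le_card (subset_biUnion_of_mem t ha)
    have : d ≤ #(t a) := hE.le_card_row a
    omega
  obtain ⟨f, hf, hfE⟩ := (all_card_le_biUnion_card_iff_exists_injective t).1 hall
  exact ⟨f, mem_perfectMatchings.2
    ⟨Finite.injective_iff_bijective.1 hf, fun i => by simpa [t] using hfE i⟩⟩

def switchPartners (E : Finset (Fin n × Fin n)) {s : ℕ} (x : Fin s → Fin n) (a b : Fin n)
    (f : Fin n → Fin n) : Finset (Fin n) :=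
  {a' | (a, f a') ∈ E ∧ (a', b) ∈ E ∧ ∀ i, x i ≠ a'}

lemma two_mul_le_add_card_switchPartners (hE : HasMinDegree E d) {s : ℕ} (x : Fin s → Fin n)
    (a b : Fin n) {f : Fin n → Fin n} (hf : Bijective f) :
    2 * d ≤ n + s + #(switchPartners E x a b f) := by
  set P : Finset (Fin n) := {a' | (a, f a') ∈ E}
  set Q : Finset (Fin n) := {a' | (a', b) ∈ E}
  have hP : #P = #{b' | (a, b') ∈ E} := card_bijective f hf (by simp [P])
  have hPQ : P ∩ Q ⊆ switchPartners E x a b f ∪ univ.image x := by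
    intro a' h
    by_cases hx : ∃ i, x i = a' <;> simp_all [P, Q, switchPartners]
  have hunion : #(P ∪ Q) ≤ n := card_le_card (subset_univ _) |>.trans_eq (card_fin n)
  have himage : #(univ.image x) ≤ s := card_image_le.trans_eq (card_fin s)
  have := card_union_add_card_inter P Q
  have := (card_le_card hPQ).trans (card_union_le _ _)
  have := hE.le_card_row a
  have : d ≤ #Q := hE.le_card_col b
  omega

lemma comp_swap_mem_extending {s : ℕ} {x y : Fin s → Fin n} {a b a' : Fin n}
    {f : Fin n → Fin n} (hf : f ∈ extending E x y) (hfa : f a = b) (ha : ∀ i, x i ≠ a)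
    (ha' : a' ∈ switchPartners E x a b f) : f ∘ Equiv.swap a a' ∈ extending E x y := by
  simp only [extending, mem_filter, mem_perfectMatchings] at hf ⊢
  obtain ⟨⟨hbij, hfE⟩, hfxy⟩ := hf
  obtain ⟨haE, hbE, hxa'⟩ : (a, f a') ∈ E ∧ (a', b) ∈ E ∧ ∀ i, x i ≠ a' := by
    simpa [switchPartners] using ha'
  refine ⟨⟨hbij.comp (Equiv.swap a a').bijective, fun z => ?_⟩, fun i => ?_⟩
  · rcases eq_or_ne z a with rfl | hza
    · simpa using haE
    rcases eq_or_ne z a' with rfl | hza'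
    · simpa [hfa] using hbE
    simpa [Equiv.swap_apply_of_ne_of_ne hza hza'] using hfE z
  · simpa [Equiv.swap_apply_of_ne_of_ne (ha i) (hxa' i)] using hfxy i

lemma mul_card_filter_apply_eq_le (hE : HasMinDegree E d) {s : ℕ} {x y : Fin s → Fin n}
    {a b : Fin n} (ha : ∀ i, x i ≠ a) {m : ℕ} (hm : m + n + s ≤ 2 * d) :
    m * #{f ∈ extending E x y | f a = b} ≤ #(extending E x y) := by
  set A := {f ∈ extending E x y | f a = b}
  have hbij : ∀ f ∈ A, Bijective f := fun f hf =>
    (mem_perfectMatchings.1 (mem_filter.1 (mem_filter.1 hf).1).1).1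
  have hT : ∀ f ∈ A, m ≤ #(switchPartners E x a b f) := fun f hf => by
    have := two_mul_le_add_card_switchPartners hE x a b (hbij f hf)
    omega
  set switch : (_ : Fin n → Fin n) × Fin n → Fin n → Fin n :=
    fun p => p.1 ∘ Equiv.swap a p.2
  have hmaps : ∀ p ∈ A.sigma (switchPartners E x a b), switch p ∈ extending E x y := by
    rintro ⟨f, a'⟩ hp
    obtain ⟨hfA, ha'⟩ := mem_sigma.1 hp
    exact comp_swap_mem_extending (mem_filter.1 hfA).1 (mem_filter.1 hfA).2 ha ha'
  -- the switched matching sends `a'` to `b`, which recovers `a'` and then `f`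
  have hinj : Set.InjOn switch (A.sigma (switchPartners E x a b)) := by
    rintro ⟨f₁, a₁⟩ h₁ ⟨f₂, a₂⟩ h₂ heq
    obtain ⟨hf₁, -⟩ := mem_sigma.1 h₁
    obtain ⟨hf₂, -⟩ := mem_sigma.1 h₂
    have hg₁ : switch ⟨f₁, a₁⟩ a₁ = b := by simpa [switch] using (mem_filter.1 hf₁).2
    have hg₂ : switch ⟨f₂, a₂⟩ a₂ = b := by simpa [switch] using (mem_filter.1 hf₂).2
    have haa : a₁ = a₂ := ((hbij f₁ hf₁).comp (Equiv.swap a a₁).bijective).injective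
      (hg₁.trans (heq ▸ hg₂).symm)
    subst haa
    have hff : f₁ = f₂ := funext fun z => by
      simpa [switch] using congrFun heq (Equiv.swap a a₁ z)
    rw [hff]
  calc m * #A = #A • m := by rw [smul_eq_mul, mul_comm]
    _ ≤ ∑ f ∈ A, #(switchPartners E x a b f) := card_nsmul_le_sum _ _ _ hT
    _ = #(A.sigma (switchPartners E x a b)) := (card_sigma _ _).symm
    _ ≤ #(extending E x y) := card_le_card_of_injOn switch hmaps hinj

lemma extending_zero (E : Finset (Fin n × Fin n)) (x y : Fin 0 → Fin n) :
    extending E x y = perfectMatchings E := by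
  simp [extending]

lemma extending_succ (E : Finset (Fin n × Fin n)) {s : ℕ} (x y : Fin (s + 1) → Fin n) :
    extending E x y = {f ∈ extending E (Fin.tail x) (Fin.tail y) | f (x 0) = y 0} := by
  ext f
  simp only [extending, mem_filter, Fin.forall_fin_succ]
  exact ⟨fun ⟨hf, h0, hsucc⟩ => ⟨⟨hf, hsucc⟩, h0⟩,
    fun ⟨⟨hf, hsucc⟩, h0⟩ => ⟨hf, h0, hsucc⟩⟩

lemma card_extending_mul_pow_le (hE : HasMinDegree E d) {m : ℕ} :
    ∀ {s : ℕ} {x y : Fin s → Fin n}, Injective x → m + n + s ≤ 2 * d →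
      #(extending E x y) * m ^ s ≤ #(perfectMatchings E)
  | 0, x, y, _, _ => by simp [extending_zero]
  | s + 1, x, y, hx, hm => by
    have hx0 : ∀ i, Fin.tail x i ≠ x 0 := fun i h => Fin.succ_ne_zero i (hx h)
    have hswitch := mul_card_filter_apply_eq_le hE hx0 (y := Fin.tail y) (b := y 0) (m := m)
      (by omega)
    calc #(extending E x y) * m ^ (s + 1)
        = m * #{f ∈ extending E (Fin.tail x) (Fin.tail y) | f (x 0) = y 0} * m ^ s := by
          rw [extending_succ, pow_succ]
          ring
      _ ≤ #(extending E (Fin.tail x) (Fin.tail y)) * m ^ s := Nat.mul_le_mul_right _ hswitch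
      _ ≤ #(perfectMatchings E) :=
          card_extending_mul_pow_le hE (hx.comp (Fin.succ_injective _)) (by omega)

lemma pred_mul_card_perfectMatchings_insert_le (hE : HasMinDegree E d) {m : ℕ}
    (hm : m + n ≤ 2 * d) {e : Fin n × Fin n} (he : e ∉ E) :
    (m - 1) * #(perfectMatchings (insert e E)) ≤ m * #(perfectMatchings E) := by
  set K := {f ∈ perfectMatchings (insert e E) | f e.1 = e.2}
  have hsplit : perfectMatchings (insert e E) ⊆ perfectMatchings E ∪ K := by
    intro f hf
    by_cases hfe : f e.1 = e.2
    · exact mem_union_right _ (mem_filter.2 ⟨hf, hfe⟩)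
    obtain ⟨hbij, hfE⟩ := mem_perfectMatchings.1 hf
    refine mem_union_left _ (mem_perfectMatchings.2 ⟨hbij, fun i => ?_⟩)
    refine (mem_insert.1 (hfE i)).resolve_left ?_
    rintro rfl
    exact hfe rfl
  have hK : m * #K ≤ #(perfectMatchings (insert e E)) := by
    simpa [extending_zero] using mul_card_filter_apply_eq_le (hE.mono (subset_insert e E))
      (x := Fin.elim0) (y := Fin.elim0) (a := e.1) (b := e.2) (m := m) (by simp)
      (by simpa using hm)
  have := (card_le_card hsplit).trans (card_union_le _ _)
  rcases m with _ | m
  · simp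
  simp only [add_tsub_cancel_right]
  nlinarith

lemma factorial_mul_pow_le_of_disjoint (hE : HasMinDegree E d) {m : ℕ} (hm : m + n ≤ 2 * d)
    (S : Finset (Fin n × Fin n)) (hS : Disjoint S E) :
    n ! * (m - 1) ^ #S ≤ m ^ #S * #(perfectMatchings (univ \ S)) := by
  induction S using Finset.induction_on with
  | empty => simp [card_perfectMatchings_univ]
  | insert e S heS ih =>
    have hE' : HasMinDegree (univ \ insert e S) d :=
      hE.mono fun e' he' => mem_sdiff.2 ⟨mem_univ _, fun h => disjoint_left.1 hS h he'⟩
    have hstep := pred_mul_card_perfectMatchings_insert_le hE' hm (e := e) (by simp)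
    rw [sdiff_insert, insert_erase (mem_sdiff.2 ⟨mem_univ _, heS⟩)] at hstep
    rw [card_insert_of_notMem heS, pow_succ, pow_succ, sdiff_insert]
    calc n ! * ((m - 1) ^ #S * (m - 1)) = n ! * (m - 1) ^ #S * (m - 1) := by ring
      _ ≤ m ^ #S * #(perfectMatchings (univ \ S)) * (m - 1) :=
          Nat.mul_le_mul_right _ (ih (disjoint_insert_left.1 hS).2)
      _ = m ^ #S * ((m - 1) * #(perfectMatchings (univ \ S))) := by ring
      _ ≤ m ^ #S * (m * #(perfectMatchings ((univ \ S).erase e))) := Nat.mul_le_mul_left _ hstep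
      _ = m ^ #S * m * #(perfectMatchings ((univ \ S).erase e)) := by ring

lemma factorial_mul_pow_le (hE : HasMinDegree E d) {m : ℕ} (hm : m + n ≤ 2 * d) :
    n ! * (m - 1) ^ (n ^ 2) ≤ m ^ (n ^ 2) * #(perfectMatchings E) := by
  have h := factorial_mul_pow_le_of_disjoint hE hm (univ \ E) sdiff_disjoint
  rw [sdiff_sdiff_right_self, inf_eq_inter, univ_inter] at h
  set k := #(univ \ E)
  have hk : k ≤ n ^ 2 := card_le_univ _ |>.trans_eq (by simp [sq])
  calc n ! * (m - 1) ^ (n ^ 2) = n ! * (m - 1) ^ k * (m - 1) ^ (n ^ 2 - k) := by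
        rw [mul_assoc, ← pow_add, Nat.add_sub_cancel' hk]
    _ ≤ m ^ k * #(perfectMatchings E) * m ^ (n ^ 2 - k) :=
        Nat.mul_le_mul h (Nat.pow_le_pow_left (Nat.sub_le m 1) _)
    _ = m ^ (n ^ 2) * #(perfectMatchings E) := by
        rw [mul_right_comm, ← pow_add, Nat.add_sub_cancel' hk]

lemma card_extending_le_pow (E : Finset (Fin n × Fin n)) {s : ℕ} {x : Fin s → Fin n}
    (hx : Injective x) (y : Fin s → Fin n) : #(extending E x y) ≤ n ^ (n - s) := by
  set K : Finset (Fin n) := (univ.image x)ᶜ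
  have hK : #K = n - s := by simp [K, card_compl, card_image_of_injective _ hx]
  have hinj : Set.InjOn (fun (f : Fin n → Fin n) (z : K) => f z) (extending E x y) := by
    intro f hf g hg hfg
    funext w
    by_cases hw : w ∈ univ.image x
    · obtain ⟨i, -, rfl⟩ := mem_image.1 hw
      rw [(mem_filter.1 hf).2 i, (mem_filter.1 hg).2 i]
    · exact congrFun hfg ⟨w, mem_compl.2 hw⟩
  calc #(extending E x y) ≤ #(univ : Finset (K → Fin n)) :=
        card_le_card_of_injOn _ (fun _ _ => mem_univ _) hinj
    _ = n ^ (n - s) := by simp [hK]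

lemma add_one_pow_le_exp_mul_pow {t : ℝ} (ht : 0 < t) (k : ℕ) :
    (t + 1) ^ k ≤ Real.exp (k / t) * t ^ k := by
  calc (t + 1) ^ k = (1 + 1 / t) ^ k * t ^ k := by
        rw [← mul_pow]
        congr 1
        field_simp
    _ ≤ Real.exp (1 / t) ^ k * t ^ k := by
        gcongr
        linarith [Real.add_one_le_exp (1 / t)]
    _ = Real.exp (k / t) * t ^ k := by rw [← Real.exp_nat_mul, mul_one_div]

lemma pow_le_exp_mul_factorial (n : ℕ) : (n : ℝ) ^ n ≤ Real.exp n * n ! :=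
  (div_le_iff₀ (by positivity)).1 (Real.pow_div_factorial_le_exp _ n.cast_nonneg n)

lemma pow_le_exp_mul_card_perfectMatchings (hE : HasMinDegree E d) (hd : 3 * n ≤ 4 * d)
    (hn : 8 ≤ n) : (n : ℝ) ^ n ≤ Real.exp (4 * n) * #(perfectMatchings E) := by
  have hnat := factorial_mul_pow_le hE (m := n / 2) (by omega)
  obtain ⟨k, hk⟩ : ∃ k, n / 2 = k + 1 := ⟨n / 2 - 1, by omega⟩
  rw [hk, Nat.add_sub_cancel] at hnat
  have hcast :
      (n ! : ℝ) * (k : ℝ) ^ (n ^ 2) ≤ ((k : ℝ) + 1) ^ (n ^ 2) * #(perfectMatchings E) := by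
    exact_mod_cast hnat
  set N : ℝ := (#(perfectMatchings E) : ℝ)
  set t : ℝ := (k : ℝ)
  have ht : 0 < t := by simp only [t, Nat.cast_pos]; omega
  have hratio : ((n ^ 2 : ℕ) : ℝ) / t ≤ 3 * n := by
    have : (n : ℝ) ≤ 3 * t := by simp only [t]; exact_mod_cast (by omega : n ≤ 3 * k)
    rw [div_le_iff₀ ht]
    push_cast
    nlinarith
  have hfact : (n ! : ℝ) ≤ Real.exp (3 * n) * N := by
    refine le_of_mul_le_mul_right ?_ (pow_pos ht (n ^ 2))
    calc (n ! : ℝ) * t ^ (n ^ 2) ≤ (t + 1) ^ (n ^ 2) * N := hcast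
      _ ≤ Real.exp (3 * n) * t ^ (n ^ 2) * N := by
          gcongr
          exact (add_one_pow_le_exp_mul_pow ht _).trans (by gcongr)
      _ = Real.exp (3 * n) * N * t ^ (n ^ 2) := by ring
  calc (n : ℝ) ^ n ≤ Real.exp n * n ! := pow_le_exp_mul_factorial n
    _ ≤ Real.exp n * (Real.exp (3 * n) * N) := by gcongr
    _ = Real.exp (4 * n) * N := by rw [← mul_assoc, ← Real.exp_add]; ring_nf

lemma card_extending_le_of_three_mul_le (hE : HasMinDegree E d) (hd : 3 * n ≤ 4 * d)
    {s : ℕ} {x : Fin s → Fin n} (hx : Injective x) (y : Fin s → Fin n) (hs : 3 * s ≤ n)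
    (hn : 3 ^ 12 < n) :
    (#(extending E x y) : ℝ) ≤ ((3 : ℝ) ^ 12 / n) ^ s * #(perfectMatchings E) := by
  have hchain := card_extending_mul_pow_le hE hx (y := y) (m := n / 7) (by omega)
  have hm : (0 : ℝ) < (n / 7 : ℕ) := by simp only [Nat.cast_pos]; omega
  have hinv : ((n / 7 : ℕ) : ℝ)⁻¹ ≤ 3 ^ 12 / n := by
    rw [inv_eq_one_div, div_le_div_iff₀ hm (by positivity), one_mul]
    exact_mod_cast (by omega : n ≤ 3 ^ 12 * (n / 7))
  calc (#(extending E x y) : ℝ) ≤ ((n / 7 : ℕ) : ℝ)⁻¹ ^ s * #(perfectMatchings E) := by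
        rw [inv_pow, inv_mul_eq_div, le_div_iff₀ (by positivity)]
        exact_mod_cast hchain
    _ ≤ ((3 : ℝ) ^ 12 / n) ^ s * #(perfectMatchings E) := by gcongr

lemma card_extending_le_of_lt_three_mul (hE : HasMinDegree E d) (hd : 3 * n ≤ 4 * d)
    {s : ℕ} {x : Fin s → Fin n} (hx : Injective x) (y : Fin s → Fin n) (hs : n < 3 * s)
    (hn : 8 ≤ n) :
    (#(extending E x y) : ℝ) ≤ ((3 : ℝ) ^ 12 / n) ^ s * #(perfectMatchings E) := by
  have hsn : s ≤ n := by simpa using Fintype.card_le_of_injective x hx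
  have hext : (#(extending E x y) : ℝ) ≤ (n : ℝ) ^ (n - s) := by
    exact_mod_cast card_extending_le_pow E hx y
  have hexp : Real.exp (4 * n) ≤ ((3 : ℝ) ^ 12) ^ s :=
    calc Real.exp (4 * n) ≤ Real.exp (12 * s) :=
          Real.exp_le_exp.2 (by exact_mod_cast (by omega : 4 * n ≤ 12 * s))
      _ = Real.exp 1 ^ (12 * s) := by rw [← Real.exp_nat_mul]; push_cast; ring_nf
      _ ≤ 3 ^ (12 * s) := by gcongr; exact Real.exp_one_lt_three.le
      _ = ((3 : ℝ) ^ 12) ^ s := pow_mul _ _ _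
  rw [div_pow, div_mul_eq_mul_div, le_div_iff₀ (by positivity)]
  calc (#(extending E x y) : ℝ) * n ^ s ≤ n ^ (n - s) * n ^ s := by gcongr
    _ = n ^ n := by rw [← pow_add, Nat.sub_add_cancel hsn]
    _ ≤ Real.exp (4 * n) * #(perfectMatchings E) :=
        pow_le_exp_mul_card_perfectMatchings hE hd hn
    _ ≤ ((3 : ℝ) ^ 12) ^ s * #(perfectMatchings E) := by gcongr

lemma card_extending_le (hE : HasMinDegree E d) (hd : 3 * n ≤ 4 * d) (hn : 0 < n) {s : ℕ}
    {x : Fin s → Fin n} (hx : Injective x) (y : Fin s → Fin n) :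
    (#(extending E x y) : ℝ) ≤ ((3 : ℝ) ^ 12 / n) ^ s * #(perfectMatchings E) := by
  by_cases hsmall : n ≤ 3 ^ 12
  · have hC : (1 : ℝ) ≤ 3 ^ 12 / n := by
      rw [one_le_div (by positivity)]
      exact_mod_cast hsmall
    calc (#(extending E x y) : ℝ) ≤ #(perfectMatchings E) := by
          exact_mod_cast card_le_card (filter_subset _ _)
      _ ≤ _ := le_mul_of_one_le_left (by positivity) (one_le_pow₀ hC)
  rcases le_or_gt (3 * s) n with hs | hs
  · exact card_extending_le_of_three_mul_le hE hd hx y hs (by omega)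
  · exact card_extending_le_of_lt_three_mul hE hd hx y hs (by omega)

end SpreadMatching

open SpreadMatching in
/-- there is an absolute constant `C` such that every balanced bipartite
graph on `n + n` vertices (given by its edge set `E ⊆ Fin n × Fin n`) with minimum
degree at least `3n/4` on both sides carries a `(C/n)`-edge-spread probability
distribution on its perfect matchings (encoded as bijections `f : Fin n → Fin n`
whose graph lies in `E`): for every partial matching, given by injections `x, y` on
`Fin s`, the probability that the random perfect matching extends it is at most
`(C/n)^s`. -/
theorem stmt5 : ∃ C : ℝ, 0 < C ∧ ∀ n : ℕ, 0 < n →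
    ∀ E : Finset (Fin n × Fin n),
    (∀ a : Fin n, 3 * (n : ℝ) / 4 ≤ ((E.filter (fun e => e.1 = a)).card : ℝ)) →
    (∀ b : Fin n, 3 * (n : ℝ) / 4 ≤ ((E.filter (fun e => e.2 = b)).card : ℝ)) →
    ∃ μ : (Fin n → Fin n) → ℝ,
      (∀ f, 0 ≤ μ f) ∧ (∑ f : Fin n → Fin n, μ f = 1) ∧
      (∀ f, μ f ≠ 0 → Function.Bijective f ∧ ∀ i, (i, f i) ∈ E) ∧
      (∀ (s : ℕ) (x y : Fin s → Fin n), Function.Injective x → Function.Injective y →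
        (∑ f ∈ Finset.univ.filter (fun f : Fin n → Fin n => ∀ i, f (x i) = y i), μ f)
          ≤ (C / n) ^ s) := by
  refine ⟨3 ^ 12, by positivity, fun n hn E hrow hcol => ?_⟩
  set d := ⌈3 * (n : ℝ) / 4⌉₊
  have hE : HasMinDegree E d :=
    ⟨fun a => Nat.ceil_le.2 (hrow a), fun b => Nat.ceil_le.2 (hcol b)⟩
  have hd : 3 * n ≤ 4 * d := by
    have := Nat.le_ceil (3 * (n : ℝ) / 4)
    exact_mod_cast (by linarith : (3 * n : ℝ) ≤ 4 * d)
  set N := #(perfectMatchings E)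
  have hN : (0 : ℝ) < N := by exact_mod_cast (perfectMatchings_nonempty hE (by omega)).card_pos
  have hsum (F : Finset (Fin n → Fin n)) :
      ∑ f ∈ F, (if f ∈ perfectMatchings E then (N : ℝ)⁻¹ else 0)
        = #(F ∩ perfectMatchings E) / N := by
    rw [sum_ite_mem, sum_const, nsmul_eq_mul, div_eq_mul_inv]
  refine ⟨fun f => if f ∈ perfectMatchings E then (N : ℝ)⁻¹ else 0,
    fun f => ite_nonneg (inv_nonneg.2 hN.le) le_rfl, ?_, fun f hf => ?_, fun s x y hx _ => ?_⟩
  · rw [hsum, univ_inter, div_self hN.ne']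
  · by_contra h
    exact hf (if_neg (mt mem_perfectMatchings.1 h))
  · have hext : univ.filter (fun f : Fin n → Fin n => ∀ i, f (x i) = y i)
        ∩ perfectMatchings E = extending E x y := by
      ext f
      simp only [extending, mem_inter, mem_filter, mem_univ, true_and]
      tauto
    rw [hsum, hext, div_le_iff₀ hN]
    exact card_extending_le hE hd hn hx y
end

section
/- Let G be an n-vertex graph with minimum degree at least 3n/4 and at least (1 − 1/C₀)·C(n,2) edges, where C₀ is a sufficiently large absolute constant. If there exists a (C'/n)-vertex-spread distribution on Hamilton path embeddings of G (embeddings of the path P_n into G), and the constant C₀ satisfies C₀ ≥ 10C', then there exists a (10C'/n)-vertex-spread distribution on Hamilton cycle embeddings of G. -/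
open Finset

def rotMap (n : ℕ) (i j : Fin n) : Fin n :=
  if h : j.val ≤ i.val then j else
    ⟨n + i.val - j.val, by have := j.isLt; have := i.isLt; omega⟩

lemma rotMap_of_le {n : ℕ} (i j : Fin n) (h : j.val ≤ i.val) : rotMap n i j = j := by
  unfold rotMap; rw [dif_pos h]

lemma rotMap_of_gt {n : ℕ} (i j : Fin n) (h : i.val < j.val) :
    rotMap n i j = ⟨n + i.val - j.val, by have := j.isLt; have := i.isLt; omega⟩ := by
  unfold rotMap; rw [dif_neg (by omega)]

lemma rotMap_val {n : ℕ} (i j : Fin n) :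
    (rotMap n i j).val = if j.val ≤ i.val then j.val else n + i.val - j.val := by
  by_cases h : j.val ≤ i.val
  · rw [rotMap_of_le _ _ h, if_pos h]
  · rw [rotMap_of_gt _ _ (by omega), if_neg h]

lemma rotMap_injective {n : ℕ} (i : Fin n) : Function.Injective (rotMap n i) := by
  intro a b hab
  have h := congrArg Fin.val hab
  rw [rotMap_val, rotMap_val] at h
  have ha := a.isLt; have hb := b.isLt
  apply Fin.ext
  by_cases h1 : a.val ≤ i.val <;> by_cases h2 : b.val ≤ i.val <;>
    simp only [h1, h2, if_pos, if_neg, if_true, if_false] at h <;> omega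

lemma fin_add_one_val {n : ℕ} [NeZero n] (i : Fin n) (h : i.val + 1 < n) :
    ((i + 1 : Fin n)).val = i.val + 1 := by
  rw [Fin.val_add, Fin.val_one']
  have h1 : 1 % n = 1 := Nat.mod_eq_of_lt (by omega)
  rw [h1, Nat.mod_eq_of_lt h]

def Iset {n : ℕ} [NeZero n] (G : SimpleGraph (Fin n)) [DecidableRel G.Adj] (hn : 0 < n)
    (f : Fin n → Fin n) : Finset (Fin n) :=
  univ.filter fun i => i.val < n - 1 ∧ G.Adj (f i) (f ⟨n - 1, by omega⟩) ∧
    G.Adj (f (i + 1)) (f ⟨0, hn⟩)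

lemma Iset_card {n : ℕ} [NeZero n] (G : SimpleGraph (Fin n)) [DecidableRel G.Adj]
    (hn : 0 < n) (hn4 : 4 ≤ n)
    (hdeg : ∀ v : Fin n, 3 * (n : ℝ) / 4 ≤ (G.degree v : ℝ))
    (f : Fin n → Fin n) (hf : Function.Injective f) :
    (n : ℝ) ≤ 2 * ((Iset G hn f).card : ℝ) := by
  classical
  have hsurj : Function.Surjective f := Finite.surjective_of_injective hf
  set last : Fin n := ⟨n - 1, by omega⟩ with hlast
  set z : Fin n := ⟨0, hn⟩ with hz
  set A : Finset (Fin n) :=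
    univ.filter (fun i => i.val < n - 1 ∧ G.Adj (f i) (f last)) with hA
  set B : Finset (Fin n) :=
    univ.filter (fun i => i.val < n - 1 ∧ G.Adj (f (i + 1)) (f z)) with hB
  have hIAB : Iset G hn f = A ∩ B := by
    ext i
    simp only [Iset, hA, hB, Finset.mem_inter, Finset.mem_filter, Finset.mem_univ, true_and]
    tauto
  have cardA : A.card = G.degree (f last) := by
    rw [← SimpleGraph.card_neighborFinset_eq_degree]
    apply Finset.card_bij (fun a _ => f a)
    · intro a ha
      rw [hA, Finset.mem_filter] at ha
      rw [SimpleGraph.mem_neighborFinset]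
      exact ha.2.2.symm
    · intro a _ b _ h
      exact hf h
    · intro b hb
      rw [SimpleGraph.mem_neighborFinset] at hb
      obtain ⟨a, rfl⟩ := hsurj b
      refine ⟨a, ?_, rfl⟩
      rw [hA, Finset.mem_filter]
      refine ⟨Finset.mem_univ _, ?_, hb.symm⟩
      have halt := a.isLt
      by_contra hlt
      have : a = last := Fin.ext (by simp [hlast]; omega)
      rw [this] at hb
      exact G.irrefl hb
  have cardB : B.card = G.degree (f z) := by
    rw [← SimpleGraph.card_neighborFinset_eq_degree]
    apply Finset.card_bij (fun a _ => f (a + 1))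
    · intro a ha
      rw [hB, Finset.mem_filter] at ha
      rw [SimpleGraph.mem_neighborFinset]
      exact ha.2.2.symm
    · intro a ha b hb h
      rw [hB, Finset.mem_filter] at ha hb
      have h' := hf h
      have := congrArg Fin.val h'
      rw [fin_add_one_val a (by omega), fin_add_one_val b (by omega)] at this
      exact Fin.ext (by omega)
    · intro b hb
      rw [SimpleGraph.mem_neighborFinset] at hb
      obtain ⟨j, rfl⟩ := hsurj b
      have hj0 : 0 < j.val := by
        rcases Nat.eq_zero_or_pos j.val with h0 | h0
        · exfalso
          have : j = z := Fin.ext (by simp [hz, h0])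
          rw [this] at hb
          exact G.irrefl hb
        · exact h0
      have hjlt := j.isLt
      refine ⟨⟨j.val - 1, by omega⟩, ?_, ?_⟩
      · rw [hB, Finset.mem_filter]
        refine ⟨Finset.mem_univ _, by simp; omega, ?_⟩
        have he : (⟨j.val - 1, by omega⟩ + 1 : Fin n) = j := by
          apply Fin.ext
          rw [fin_add_one_val _ (by simp; omega)]
          simp; omega
        rw [he]
        exact hb.symm
      · have he : (⟨j.val - 1, by omega⟩ + 1 : Fin n) = j := by
          apply Fin.ext
          rw [fin_add_one_val _ (by simp; omega)]
          simp; omega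
        rw [he]
  have hie : (A ∩ B).card + (A ∪ B).card = A.card + B.card :=
    Finset.card_inter_add_card_union A B
  have hun : (A ∪ B).card ≤ n := by
    calc (A ∪ B).card ≤ (univ : Finset (Fin n)).card := Finset.card_le_univ _
    _ = n := by simp
  have d1 := hdeg (f last)
  have d2 := hdeg (f z)
  rw [hIAB]
  have hieR : ((A ∩ B).card : ℝ) + ((A ∪ B).card : ℝ) = (A.card : ℝ) + (B.card : ℝ) := by
    exact_mod_cast hie
  have cardAR : (A.card : ℝ) = (G.degree (f last) : ℝ) := by exact_mod_cast cardA
  have cardBR : (B.card : ℝ) = (G.degree (f z) : ℝ) := by exact_mod_cast cardB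
  have hunR : ((A ∪ B).card : ℝ) ≤ (n : ℝ) := by exact_mod_cast hun
  linarith

lemma rot_props {n : ℕ} [NeZero n] (G : SimpleGraph (Fin n)) [DecidableRel G.Adj]
    (hn : 0 < n) (f : Fin n → Fin n) (hf : Function.Injective f)
    (hpath : ∀ (k : ℕ) (hk : k + 1 < n),
      G.Adj (f ⟨k, Nat.lt_of_succ_lt hk⟩) (f ⟨k + 1, hk⟩))
    (i : Fin n) (hi : i ∈ Iset G hn f) :
    Function.Injective (f ∘ rotMap n i) ∧
    (∀ (k : ℕ) (hk : k + 1 < n),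
      G.Adj ((f ∘ rotMap n i) ⟨k, Nat.lt_of_succ_lt hk⟩) ((f ∘ rotMap n i) ⟨k + 1, hk⟩)) ∧
    G.Adj ((f ∘ rotMap n i) ⟨0, hn⟩) ((f ∘ rotMap n i) ⟨n - 1, Nat.sub_lt hn Nat.one_pos⟩) := by
  rw [Iset, Finset.mem_filter] at hi
  obtain ⟨-, hlt, hA, hB⟩ := hi
  have hiv := i.isLt
  have hcong : ∀ (a b u v : Fin n), a = u → b = v → G.Adj (f u) (f v) → G.Adj (f a) (f b) := by
    rintro a b u v rfl rfl h; exact h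
  have hadj : ∀ a b : Fin n, a.val + 1 = b.val → G.Adj (f a) (f b) := by
    intro a b hab
    have hb := b.isLt
    have h := hpath a.val (by omega)
    refine hcong _ _ _ _ (Fin.ext ?_) (Fin.ext ?_) h <;> simp [hab]
  refine ⟨hf.comp (rotMap_injective i), ?_, ?_⟩
  · intro k hk
    simp only [Function.comp_apply]
    by_cases h1 : k + 1 ≤ i.val
    · refine hcong _ _ _ _ ((rotMap_of_le _ _ (by simpa using by omega)))
        ((rotMap_of_le _ _ (by simpa using h1))) (hadj _ _ (by simp))
    · by_cases h2 : k ≤ i.val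
      · refine hcong _ _ i ⟨n - 1, by omega⟩ ?_ ?_ hA
        · rw [rotMap_of_le _ _ (by simpa using h2)]
          exact Fin.ext (by simp; omega)
        · rw [rotMap_of_gt _ _ (by simp; omega)]
          exact Fin.ext (by simp; omega)
      · refine (hadj (rotMap n i ⟨k + 1, hk⟩) (rotMap n i ⟨k, Nat.lt_of_succ_lt hk⟩) ?_).symm
        rw [rotMap_val, rotMap_val]
        simp only [if_neg (show ¬ ((⟨k + 1, hk⟩ : Fin n)).val ≤ i.val by simp; omega),
          if_neg (show ¬ ((⟨k, Nat.lt_of_succ_lt hk⟩ : Fin n)).val ≤ i.val by simp; omega)]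
        omega
  · simp only [Function.comp_apply]
    refine hcong _ _ ⟨0, hn⟩ (i + 1) ?_ ?_ hB.symm
    · exact rotMap_of_le _ _ (by simp)
    · rw [rotMap_of_gt _ _ (by simp; omega)]
      apply Fin.ext
      rw [fin_add_one_val i (by omega)]
      simp; omega

/-- let `G` be an `n`-vertex graph with minimum degree at least `3n/4`
and at least `(1 - 1/C₀) * C(n,2)` edges, where `C₀ ≥ 10 C'`.  If there is a
`(C'/n)`-vertex-spread distribution on Hamilton path embeddings of `G` (injections
`f : Fin n → Fin n` mapping consecutive indices to adjacent vertices), then there is a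
`(10C'/n)`-vertex-spread distribution on Hamilton cycle embeddings of `G`. -/
theorem stmt6 (C' C₀ : ℝ) (hC' : 0 < C') (hC₀ : 10 * C' ≤ C₀) (n : ℕ) (hn : 0 < n)
    (G : SimpleGraph (Fin n)) [DecidableRel G.Adj]
    (hdeg : ∀ v : Fin n, 3 * (n : ℝ) / 4 ≤ (G.degree v : ℝ))
    (hedges : (1 - 1 / C₀) * (n.choose 2 : ℝ) ≤ (G.edgeFinset.card : ℝ))
    (μ : (Fin n → Fin n) → ℝ)
    (hnn : ∀ f, 0 ≤ μ f) (hsum : ∑ f : Fin n → Fin n, μ f = 1)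
    (hsupp : ∀ f, μ f ≠ 0 → Function.Injective f ∧
      ∀ (i : ℕ) (hi : i + 1 < n), G.Adj (f ⟨i, Nat.lt_of_succ_lt hi⟩) (f ⟨i + 1, hi⟩))
    (hspread : ∀ (s : ℕ) (x y : Fin s → Fin n), Function.Injective x →
      Function.Injective y →
      (∑ f ∈ Finset.univ.filter (fun f : Fin n → Fin n => ∀ i, f (x i) = y i), μ f)
        ≤ (C' / n) ^ s) :
    ∃ ν : (Fin n → Fin n) → ℝ,
      (∀ f, 0 ≤ ν f) ∧ (∑ f : Fin n → Fin n, ν f = 1) ∧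
      (∀ f, ν f ≠ 0 → Function.Injective f ∧
        (∀ (i : ℕ) (hi : i + 1 < n), G.Adj (f ⟨i, Nat.lt_of_succ_lt hi⟩) (f ⟨i + 1, hi⟩)) ∧
        G.Adj (f ⟨0, hn⟩) (f ⟨n - 1, Nat.sub_lt hn Nat.one_pos⟩)) ∧
      (∀ (s : ℕ) (x y : Fin s → Fin n), Function.Injective x → Function.Injective y →
        (∑ f ∈ Finset.univ.filter (fun f : Fin n → Fin n => ∀ i, f (x i) = y i), ν f)
          ≤ (10 * C' / n) ^ s) := by
  haveI : NeZero n := ⟨hn.ne'⟩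
  -- n ≥ 4
  have hn4 : 4 ≤ n := by
    have hd := hdeg ⟨0, hn⟩
    have hlt := G.degree_lt_card_verts ⟨0, hn⟩
    rw [Fintype.card_fin] at hlt
    have h3 : ((G.degree ⟨0, hn⟩ : ℝ)) + 1 ≤ (n : ℝ) := by exact_mod_cast hlt
    have : (4 : ℝ) ≤ (n : ℝ) := by linarith
    exact_mod_cast this
  have hnR : (0 : ℝ) < (n : ℝ) := by exact_mod_cast hn
  have hn4R : (4 : ℝ) ≤ (n : ℝ) := by exact_mod_cast hn4
  set ν : (Fin n → Fin n) → ℝ := fun g =>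
    ∑ f : Fin n → Fin n, ∑ i ∈ Iset G hn f,
      if g = f ∘ rotMap n i then μ f / ((Iset G hn f).card : ℝ) else 0 with hν
  have hcard : ∀ f, μ f ≠ 0 → (n : ℝ) ≤ 2 * ((Iset G hn f).card : ℝ) :=
    fun f hf => Iset_card G hn hn4 hdeg f (hsupp f hf).1
  have hcardpos : ∀ f, μ f ≠ 0 → (0 : ℝ) < ((Iset G hn f).card : ℝ) := by
    intro f hf
    have := hcard f hf
    linarith
  -- key rearrangement
  have key : ∀ (p : (Fin n → Fin n) → Prop) (inst : DecidablePred p),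
      ∑ g ∈ univ.filter p, ν g
        = ∑ f : Fin n → Fin n, ∑ i ∈ Iset G hn f,
            if p (f ∘ rotMap n i) then μ f / ((Iset G hn f).card : ℝ) else 0 := by
    intro p inst
    rw [hν]
    rw [Finset.sum_comm]
    refine Finset.sum_congr rfl fun f _ => ?_
    rw [Finset.sum_comm]
    refine Finset.sum_congr rfl fun i _ => ?_
    rw [Finset.sum_ite_eq' (univ.filter p) (f ∘ rotMap n i)
      (fun _ => μ f / ((Iset G hn f).card : ℝ))]
    simp [Finset.mem_filter]
  -- sums to one
  have hone : ∑ g : Fin n → Fin n, ν g = 1 := by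
    have h := key (fun _ => True) (fun _ => instDecidableTrue)
    rw [Finset.filter_true] at h
    rw [h, ← hsum]
    refine Finset.sum_congr rfl fun f _ => ?_
    simp only [if_true]
    rw [Finset.sum_const, nsmul_eq_mul]
    by_cases hf : μ f = 0
    · simp [hf]
    · have h1 := hcardpos f hf
      field_simp
  -- nonneg
  have hnn' : ∀ g, 0 ≤ ν g := by
    intro g
    rw [hν]
    refine Finset.sum_nonneg fun f _ => Finset.sum_nonneg fun i _ => ?_
    split
    · exact div_nonneg (hnn f) (Nat.cast_nonneg _)
    · exact le_refl 0
  refine ⟨ν, hnn', hone, ?_, ?_⟩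
  · -- support
    intro g hg
    rw [hν] at hg
    obtain ⟨f, -, hf⟩ := Finset.exists_ne_zero_of_sum_ne_zero hg
    obtain ⟨i, hi, hterm⟩ := Finset.exists_ne_zero_of_sum_ne_zero hf
    have hgf : g = f ∘ rotMap n i := by
      by_contra h
      simp [h] at hterm
    have hμ : μ f ≠ 0 := by
      intro h
      simp [h] at hterm
    obtain ⟨hinj, hp⟩ := hsupp f hμ
    obtain ⟨rinj, rpath, rcyc⟩ := rot_props G hn f hinj hp i hi
    subst hgf
    exact ⟨rinj, rpath, rcyc⟩
  · -- spreadness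
    intro s x y hx hy
    rcases Nat.eq_zero_or_pos s with hs | hs
    · subst hs
      have hfilt : univ.filter (fun f : Fin n → Fin n => ∀ i, f (x i) = y i) = univ :=
        Finset.filter_true_of_mem fun f _ => fun i => i.elim0
      rw [hfilt, pow_zero]
      exact le_of_eq hone
    · refine le_trans (le_of_eq (key (fun f => ∀ i : Fin s, f (x i) = y i)
        (fun a => Nat.decidableForallFin fun i => a (x i) = y i))) ?_
      have step1 : ∀ f : Fin n → Fin n,
          (∑ i ∈ Iset G hn f,
            if (∀ k, (f ∘ rotMap n i) (x k) = y k) then μ f / ((Iset G hn f).card : ℝ) else 0)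
          ≤ ∑ i : Fin n,
            if (∀ k, (f ∘ rotMap n i) (x k) = y k) then μ f * (2 / (n : ℝ)) else 0 := by
        intro f
        refine le_trans (Finset.sum_le_sum fun i _ => ?_)
          (Finset.sum_le_sum_of_subset_of_nonneg (Finset.subset_univ _) fun i _ _ => ?_)
        · by_cases h : ∀ k, (f ∘ rotMap n i) (x k) = y k
          · rw [if_pos h, if_pos h]
            by_cases hf : μ f = 0
            · simp [hf]
            · have h1 := hcardpos f hf
              have h2 := hcard f hf
              calc μ f / ((Iset G hn f).card : ℝ)
                  = μ f * (((Iset G hn f).card : ℝ))⁻¹ := div_eq_mul_inv _ _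
                _ ≤ μ f * (2 / (n : ℝ)) := by
                    refine mul_le_mul_of_nonneg_left ?_ (hnn f)
                    calc (((Iset G hn f).card : ℝ))⁻¹
                        ≤ ((n : ℝ) / 2)⁻¹ := by
                          apply inv_anti₀ (by linarith) (by linarith)
                      _ = 2 / (n : ℝ) := by rw [inv_div]
          · rw [if_neg h, if_neg h]
        · split
          · exact mul_nonneg (hnn f) (by positivity)
          · exact le_refl 0
      calc ∑ f : Fin n → Fin n, ∑ i ∈ Iset G hn f,
            (if (∀ k, (f ∘ rotMap n i) (x k) = y k) then μ f / ((Iset G hn f).card : ℝ) else 0)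
          ≤ ∑ f : Fin n → Fin n, ∑ i : Fin n,
            (if (∀ k, (f ∘ rotMap n i) (x k) = y k) then μ f * (2 / (n : ℝ)) else 0) :=
            Finset.sum_le_sum fun f _ => step1 f
        _ = ∑ i : Fin n, ∑ f : Fin n → Fin n,
            (if (∀ k, (f ∘ rotMap n i) (x k) = y k) then μ f * (2 / (n : ℝ)) else 0) :=
            Finset.sum_comm
        _ ≤ ∑ _i : Fin n, (C' / (n : ℝ)) ^ s * (2 / (n : ℝ)) := by
            refine Finset.sum_le_sum fun i _ => ?_
            have hsp := hspread s (fun k => rotMap n i (x k)) y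
              ((rotMap_injective i).comp hx) hy
            calc ∑ f : Fin n → Fin n,
                  (if (∀ k, (f ∘ rotMap n i) (x k) = y k) then μ f * (2 / (n : ℝ)) else 0)
                = (∑ f ∈ univ.filter (fun f : Fin n → Fin n =>
                    ∀ k, f (rotMap n i (x k)) = y k), μ f) * (2 / (n : ℝ)) := by
                  rw [Finset.sum_filter, Finset.sum_mul]
                  refine Finset.sum_congr rfl fun f _ => ?_
                  simp only [Function.comp_apply]
                  split_ifs with h
                  · ring
                  · simp
              _ ≤ (C' / (n : ℝ)) ^ s * (2 / (n : ℝ)) := by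
                  refine mul_le_mul_of_nonneg_right hsp (by positivity)
        _ = (n : ℝ) * ((C' / (n : ℝ)) ^ s * (2 / (n : ℝ))) := by
            rw [Finset.sum_const, Finset.card_univ, Fintype.card_fin, nsmul_eq_mul]
        _ ≤ (10 * C' / (n : ℝ)) ^ s := by
            have hp : (0 : ℝ) < (C' / (n : ℝ)) ^ s := pow_pos (by positivity) s
            have h10s : (10 : ℝ) ≤ 10 ^ s := by
              calc (10 : ℝ) = 10 ^ 1 := (pow_one _).symm
                _ ≤ 10 ^ s := pow_le_pow_right₀ (by norm_num) hs
            have he : (10 * C' / (n : ℝ)) ^ s = 10 ^ s * (C' / (n : ℝ)) ^ s := by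
              rw [← mul_pow, mul_div_assoc]
            have he2 : (n : ℝ) * ((C' / (n : ℝ)) ^ s * (2 / (n : ℝ)))
                = 2 * (C' / (n : ℝ)) ^ s := by
              field_simp
            rw [he, he2]
            nlinarith
end
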